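/- arXiv:2508.21242 — 5 statements merged into one kernel-verified Lean document; each statement's English description precedes it below -/
import Mathlib

section
/- Let X be a Banach space and T : X → X a bounded linear operator with ‖T − T²‖ < 1/4. Then the operator S = Σ_{m=0}^∞ binom(2m, m) (T − T²)^m converges in operator norm and satisfies (I − 2T)² S² = I, where I is the identity operator. -/
/-!
With `A = T - T²`, the series `S = Σ binom(2m,m) Aᵐ` converges absolutely because
`binom(2m,m) ≤ 4ᵐ` and `‖4A‖ < 1`. Its Cauchy square is the geometric series `Σ (4A)ⁿ`, by the
convolution identity `Σ_{i+j=n} binom(2i,i) binom(2j,j) = 4ⁿ` (the coefficientwise form of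
`((1-4z)^{-1/2})² = (1-4z)⁻¹`), which follows by induction from
`(k+1) binom(2k+2,k+1) = 2(2k+1) binom(2k,k)` and the symmetry `i ↔ j`. Hence `(1 - 4A) S² = 1`, and `1 - 4A = (1 - 2T)²`.
-/

open Finset

namespace Nat

theorem two_mul_sum_antidiagonal_fst_mul (f : ℕ → ℕ) (n : ℕ) :
    2 * ∑ p ∈ antidiagonal n, p.1 * (f p.1 * f p.2) = n * ∑ p ∈ antidiagonal n, f p.1 * f p.2 := by
  have hswap : ∑ p ∈ antidiagonal n, p.1 * (f p.1 * f p.2)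
      = ∑ p ∈ antidiagonal n, p.2 * (f p.1 * f p.2) := by
    rw [← Nat.sum_antidiagonal_swap]
    exact sum_congr rfl fun p _ => by rw [Prod.fst_swap, Prod.snd_swap, mul_comm (f p.2)]
  rw [two_mul]
  nth_rw 2 [hswap]
  rw [← sum_add_distrib, mul_sum]
  refine sum_congr rfl fun p hp => ?_
  rw [← add_mul, mem_antidiagonal.mp hp]

theorem sum_antidiagonal_centralBinom_mul (n : ℕ) :
    ∑ p ∈ antidiagonal n, p.1.centralBinom * p.2.centralBinom = 4 ^ n := by
  induction n with
  | zero => simp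
  | succ n ih =>
    refine Nat.eq_of_mul_eq_mul_left n.succ_pos ?_
    calc (n + 1) * ∑ p ∈ antidiagonal (n + 1), p.1.centralBinom * p.2.centralBinom
        = 2 * ∑ p ∈ antidiagonal (n + 1), p.1 * (p.1.centralBinom * p.2.centralBinom) :=
          (two_mul_sum_antidiagonal_fst_mul _ _).symm
      _ = 2 * ∑ p ∈ antidiagonal n,
            (2 * (2 * p.1 + 1)) * (p.1.centralBinom * p.2.centralBinom) := by
          rw [Nat.sum_antidiagonal_succ, zero_mul, zero_add]
          simp only [← mul_assoc, succ_mul_centralBinom_succ]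
      _ = 4 * (2 * ∑ p ∈ antidiagonal n, p.1 * (p.1.centralBinom * p.2.centralBinom)
            + ∑ p ∈ antidiagonal n, p.1.centralBinom * p.2.centralBinom) := by
          rw [mul_sum, mul_sum, ← sum_add_distrib, mul_sum]
          exact sum_congr rfl fun _ _ => by ring
      _ = (n + 1) * 4 ^ (n + 1) := by
          rw [two_mul_sum_antidiagonal_fst_mul, ih]
          ring

end Nat

section CentralBinomSeries

variable {R : Type*} [NormedRing R] [NormedAlgebra ℝ R] {a : R}

theorem norm_four_smul_lt_one (ha : ‖a‖ < 1 / 4) : ‖(4 : ℝ) • a‖ < 1 := by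
  rw [norm_smul, Real.norm_ofNat]
  linarith

theorem norm_centralBinom_smul_pow_le (a : R) (m : ℕ) :
    ‖(m.centralBinom : ℝ) • a ^ m‖ ≤ ‖((4 : ℝ) • a) ^ m‖ := by
  rw [smul_pow, norm_smul, norm_smul, Real.norm_natCast, norm_pow (4 : ℝ), Real.norm_ofNat]
  gcongr
  exact_mod_cast m.centralBinom_le_four_pow

theorem summable_norm_centralBinom_smul_pow (ha : ‖a‖ < 1 / 4) :
    Summable fun m : ℕ => ‖(m.centralBinom : ℝ) • a ^ m‖ :=
  (summable_norm_geometric_of_norm_lt_one (norm_four_smul_lt_one ha)).of_nonneg_of_le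
    (fun _ => norm_nonneg _) (norm_centralBinom_smul_pow_le a)

variable [CompleteSpace R]

theorem tsum_centralBinom_smul_pow_sq (ha : ‖a‖ < 1 / 4) :
    (∑' m : ℕ, (m.centralBinom : ℝ) • a ^ m) ^ 2 = ∑' n : ℕ, ((4 : ℝ) • a) ^ n := by
  have hs := summable_norm_centralBinom_smul_pow ha
  rw [sq, tsum_mul_tsum_eq_tsum_sum_antidiagonal_of_summable_norm hs hs]
  refine tsum_congr fun n => ?_
  calc ∑ p ∈ antidiagonal n, (p.1.centralBinom : ℝ) • a ^ p.1 * (p.2.centralBinom : ℝ) • a ^ p.2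
      = ∑ p ∈ antidiagonal n, ((p.1.centralBinom * p.2.centralBinom : ℕ) : ℝ) • a ^ n :=
        sum_congr rfl fun p hp => by
          rw [smul_mul_smul_comm, ← pow_add, mem_antidiagonal.mp hp, Nat.cast_mul]
    _ = ((4 : ℝ) • a) ^ n := by
        rw [← sum_smul, ← Nat.cast_sum, Nat.sum_antidiagonal_centralBinom_mul, smul_pow]
        norm_num

theorem one_sub_four_smul_mul_tsum_centralBinom_smul_pow_sq (ha : ‖a‖ < 1 / 4) :
    (1 - (4 : ℝ) • a) * (∑' m : ℕ, (m.centralBinom : ℝ) • a ^ m) ^ 2 = 1 := by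
  rw [tsum_centralBinom_smul_pow_sq ha]
  exact mul_neg_geom_series _ (norm_four_smul_lt_one ha)

end CentralBinomSeries

theorem one_sub_two_nsmul_sq {R : Type*} [Ring R] [Algebra ℝ R] (t : R) :
    (1 - 2 • t) ^ 2 = 1 - (4 : ℝ) • (t - t ^ 2) := by
  rw [ofNat_smul_eq_nsmul ℝ 4]
  simp only [nsmul_eq_mul, Nat.cast_ofNat]
  noncomm_ring

/-- if `‖T - T²‖ < 1/4` then the central-binomial series
`S = Σ binom(2m,m) (T - T²)^m` converges in operator norm and `(I - 2T)² S² = I`. -/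
theorem stmt_6 {X : Type*} [NormedAddCommGroup X] [NormedSpace ℝ X] [CompleteSpace X]
    (T : X →L[ℝ] X) (hT : ‖T - T ^ 2‖ < 1 / 4) :
    ∃ S : X →L[ℝ] X,
      HasSum (fun m : ℕ => (Nat.centralBinom m : ℝ) • (T - T ^ 2) ^ m) S ∧
      ((1 : X →L[ℝ] X) - 2 • T) ^ 2 * S ^ 2 = 1 := by
  refine ⟨_, (summable_norm_centralBinom_smul_pow (a := T - T ^ 2) hT).of_norm.hasSum, ?_⟩
  rw [one_sub_two_nsmul_sq]
  exact one_sub_four_smul_mul_tsum_centralBinom_smul_pow_sq hT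
end

section
/- Let X be a Banach space and T a bounded operator with ‖T − T²‖ ≤ θ < 1/4. Define S = Σ_{m=0}^∞ binom(2m,m)(T − T²)^m and P = (1/2)(I − (I − 2T)S). Then ‖S‖ ≤ (1 − 4θ)^{-1/2} and ‖P‖ ≤ (1/2)(1 + (1 + 2‖T‖)/√(1 − 4θ)). -/
/-!
`S` is the binomial series `(1 - 4x)^{-1/2} = ∑ C(2m, m) x^m` evaluated at `x = T - T²`.
Its norm is dominated termwise by the scalar series at `x = θ`, whose sum is `(1 - 4θ)^{-1/2}`;
the coefficients `C(2m, m)` are read off from the binomial series of `(1 - y)^{-1/2}` at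
`y = 4x`, since `(1/2)(3/2)⋯(m - 1/2) · 4^m = m! · C(2m, m)`.
The bound on `P` is then the triangle inequality.
-/

theorem ascPochhammer_eval_half_mul_four_pow (n : ℕ) :
    (ascPochhammer ℝ n).eval (1 / 2) * 4 ^ n = n.factorial * n.centralBinom := by
  induction n with
  | zero => simp
  | succ n ih =>
    have h : ((n : ℝ) + 1) * (n + 1).centralBinom = 2 * (2 * n + 1) * n.centralBinom := by
      exact_mod_cast Nat.succ_mul_centralBinom_succ n
    rw [ascPochhammer_succ_eval, Nat.factorial_succ, Nat.cast_mul, Nat.cast_succ]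
    linear_combination (2 + 4 * n : ℝ) * ih - (n.factorial : ℝ) * h

theorem Ring.multichoose_half_mul_four_pow (n : ℕ) :
    Ring.multichoose (1 / 2 : ℝ) n * 4 ^ n = n.centralBinom := by
  have h := Ring.factorial_nsmul_multichoose_eq_ascPochhammer (1 / 2 : ℝ) n
  rw [Polynomial.ascPochhammer_smeval_eq_eval, nsmul_eq_mul] at h
  apply mul_left_cancel₀ (Nat.cast_ne_zero.2 n.factorial_ne_zero : (n.factorial : ℝ) ≠ 0)
  rw [← mul_assoc, h, ascPochhammer_eval_half_mul_four_pow]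

theorem hasSum_centralBinom_mul_pow {x : ℝ} (hx : |x| < 1 / 4) :
    HasSum (fun n => (n.centralBinom : ℝ) * x ^ n) (Real.sqrt (1 - 4 * x))⁻¹ := by
  have h4x : 4 * x ∈ Metric.eball (0 : ℝ) 1 := by
    rw [← ENNReal.coe_one, Metric.eball_coe, NNReal.coe_one, mem_ball_zero_iff, Real.norm_eq_abs,
      abs_mul, abs_of_pos four_pos]
    linarith
  have hbinom := (Real.one_div_one_sub_rpow_hasFPowerSeriesOnBall_zero (1 / 2)).hasSum h4x
  simp only [FormalMultilinearSeries.ofScalars_apply_eq, zero_add, smul_eq_mul] at hbinom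
  rw [← Real.sqrt_eq_rpow] at hbinom
  have hcoeff (n : ℕ) :
      (n.centralBinom : ℝ) * x ^ n = Ring.choose (1 / 2 + n - 1 : ℝ) n * (4 * x) ^ n := by
    rw [← Ring.multichoose_eq, mul_pow, ← mul_assoc, Ring.multichoose_half_mul_four_pow]
  simpa only [hcoeff, one_div] using hbinom

section NormedAlgebra

variable {R : Type*} [NormedRing R]

-- Weaker than `NormOneClass`, which fails for `X →L[ℝ] X` when `X` is the zero space.
theorem norm_pow_le_of_norm_one_le (h1 : ‖(1 : R)‖ ≤ 1) (a : R) : ∀ n : ℕ, ‖a ^ n‖ ≤ ‖a‖ ^ n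
  | 0 => by simpa using h1
  | n + 1 => norm_pow_le' a n.succ_pos

variable [NormedAlgebra ℝ R]

theorem norm_le_of_hasSum_centralBinom_smul_pow (h1 : ‖(1 : R)‖ ≤ 1) {a S : R} {θ : ℝ}
    (ha : ‖a‖ ≤ θ) (hθ : θ < 1 / 4)
    (hS : HasSum (fun m : ℕ => (m.centralBinom : ℝ) • a ^ m) S) :
    ‖S‖ ≤ (Real.sqrt (1 - 4 * θ))⁻¹ := by
  have hθ₀ : 0 ≤ θ := (norm_nonneg a).trans ha
  refine hS.norm_le_of_bounded (hasSum_centralBinom_mul_pow (abs_lt.2 ⟨by linarith, hθ⟩))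
    fun m => ?_
  rw [norm_smul, Real.norm_natCast]
  gcongr
  exact (norm_pow_le_of_norm_one_le h1 a m).trans (pow_le_pow_left₀ (norm_nonneg a) ha m)

theorem norm_half_smul_one_sub_one_sub_two_smul_mul_le (h1 : ‖(1 : R)‖ ≤ 1) (T S : R) :
    ‖(1 / 2 : ℝ) • (1 - (1 - 2 • T) * S)‖ ≤ 1 / 2 * (1 + (1 + 2 * ‖T‖) * ‖S‖) := by
  have h2T : ‖(1 : R) - 2 • T‖ ≤ 1 + 2 * ‖T‖ :=
    (norm_sub_le _ _).trans (add_le_add h1 (norm_nsmul_le ..))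
  rw [norm_smul, Real.norm_of_nonneg (by norm_num)]
  gcongr
  calc ‖1 - (1 - 2 • T) * S‖ ≤ ‖(1 : R)‖ + ‖1 - 2 • T‖ * ‖S‖ :=
        (norm_sub_le _ _).trans (add_le_add le_rfl (norm_mul_le _ _))
    _ ≤ 1 + (1 + 2 * ‖T‖) * ‖S‖ := by gcongr

end NormedAlgebra

theorem stmt_8_general {X : Type*} [NormedAddCommGroup X] [NormedSpace ℝ X]
    (T : X →L[ℝ] X) (θ : ℝ) (hθ : θ < 1 / 4) (hT : ‖T - T ^ 2‖ ≤ θ)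
    (S : X →L[ℝ] X)
    (hS : HasSum (fun m : ℕ => (Nat.centralBinom m : ℝ) • (T - T ^ 2) ^ m) S) :
    ‖S‖ ≤ (Real.sqrt (1 - 4 * θ))⁻¹ ∧
      ‖(1 / 2 : ℝ) • ((1 : X →L[ℝ] X) - ((1 : X →L[ℝ] X) - 2 • T) * S)‖ ≤
        (1 / 2) * (1 + (1 + 2 * ‖T‖) / Real.sqrt (1 - 4 * θ)) := by
  have h1 : ‖(1 : X →L[ℝ] X)‖ ≤ 1 := ContinuousLinearMap.norm_id_le
  have hS_le := norm_le_of_hasSum_centralBinom_smul_pow h1 hT hθ hS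
  refine ⟨hS_le, (norm_half_smul_one_sub_one_sub_two_smul_mul_le h1 T S).trans ?_⟩
  rw [div_eq_mul_inv (1 + 2 * ‖T‖)]
  gcongr

/-- norm estimates `‖S‖ ≤ (1-4θ)^{-1/2}` and
`‖P‖ ≤ (1/2)(1 + (1 + 2‖T‖)/√(1-4θ))`. -/
theorem stmt_8 {X : Type*} [NormedAddCommGroup X] [NormedSpace ℝ X] [CompleteSpace X]
    (T : X →L[ℝ] X) (θ : ℝ) (hθ : θ < 1 / 4) (hT : ‖T - T ^ 2‖ ≤ θ)
    (S : X →L[ℝ] X)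
    (hS : HasSum (fun m : ℕ => (Nat.centralBinom m : ℝ) • (T - T ^ 2) ^ m) S) :
    ‖S‖ ≤ (Real.sqrt (1 - 4 * θ))⁻¹ ∧
      ‖(1 / 2 : ℝ) • ((1 : X →L[ℝ] X) - ((1 : X →L[ℝ] X) - 2 • T) * S)‖ ≤
        (1 / 2) * (1 + (1 + 2 * ‖T‖) / Real.sqrt (1 - 4 * θ)) :=
  stmt_8_general T θ hθ hT S hS
end

section
/- Let X be a Banach space and T a bounded operator with ‖T − T²‖ ≤ θ < 1/4. Let P = (1/2)(I − (I − 2T)S) with S = Σ_{m=0}^∞ binom(2m,m)(T − T²)^m. Then every fixed point of T is a fixed point of P: if Tx = x then Px = x. -/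
/-! On a fixed point `x` of `T` the operator `T - T²` vanishes, so only the constant term
`binom(0,0) = 1` of the series `S` survives at `x`: `S x = x`. Then
`P x = ½ (x - (x - 2x)) = x`. -/

namespace ContinuousLinearMap

variable {𝕜 E : Type*} [NontriviallyNormedField 𝕜] [NormedAddCommGroup E] [NormedSpace 𝕜 E]

theorem pow_succ_apply_eq_zero {A : E →L[𝕜] E} {x : E} (hx : A x = 0) (m : ℕ) :
    (A ^ (m + 1)) x = 0 := by
  rw [pow_succ, mul_apply_eq_comp, hx, map_zero]

theorem apply_eq_smul_of_hasSum_smul_pow {A S : E →L[𝕜] E} {c : ℕ → 𝕜}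
    (hS : HasSum (fun m => c m • A ^ m) S) {x : E} (hx : A x = 0) : S x = c 0 • x := by
  have hSx : HasSum (fun m => (c m • A ^ m) x) (S x) := hS.mapL (apply 𝕜 E x)
  have hterms : (fun m => (c m • A ^ m) x) = Pi.single 0 (c 0 • x) := by
    funext m
    cases m with
    | zero => simp
    | succ m => simp [pow_succ_apply_eq_zero hx m]
  rw [hterms] at hSx
  exact hSx.unique (hasSum_pi_single 0 (c 0 • x))

theorem sub_sq_apply_eq_zero_of_apply_eq {T : E →L[𝕜] E} {x : E} (hx : T x = x) :
    (T - T ^ 2) x = 0 := by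
  rw [sub_apply, pow_two, mul_apply_eq_comp, hx, hx, sub_self]

end ContinuousLinearMap

open ContinuousLinearMap in
theorem stmt_10_general {X : Type*} [NormedAddCommGroup X] [NormedSpace ℝ X]
    (T : X →L[ℝ] X)
    (S : X →L[ℝ] X)
    (hS : HasSum (fun m : ℕ => (Nat.centralBinom m : ℝ) • (T - T ^ 2) ^ m) S)
    (x : X) (hx : T x = x) :
    ((1 / 2 : ℝ) • ((1 : X →L[ℝ] X) - ((1 : X →L[ℝ] X) - 2 • T) * S)) x = x := by
  have hSx : S x = x := by
    simpa using apply_eq_smul_of_hasSum_smul_pow hS (sub_sq_apply_eq_zero_of_apply_eq hx)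
  simp only [smul_apply, sub_apply, mul_apply_eq_comp, one_apply_eq_self, hSx, hx]
  module

/-- every fixed point of `T` is a fixed point of `P`. -/
theorem stmt_10 {X : Type*} [NormedAddCommGroup X] [NormedSpace ℝ X] [CompleteSpace X]
    (T : X →L[ℝ] X) (θ : ℝ) (hθ : θ < 1 / 4) (hT : ‖T - T ^ 2‖ ≤ θ)
    (S : X →L[ℝ] X)
    (hS : HasSum (fun m : ℕ => (Nat.centralBinom m : ℝ) • (T - T ^ 2) ^ m) S)
    (x : X) (hx : T x = x) :
    ((1 / 2 : ℝ) • ((1 : X →L[ℝ] X) - ((1 : X →L[ℝ] X) - 2 • T) * S)) x = x :=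
  stmt_10_general T S hS x hx
end

section
/- Let X be a Banach space and T a finite-rank bounded operator with ‖T − T²‖ ≤ θ < 1/4. Then the projection P = (1/2)(I − (I − 2T)S), where S = Σ_{m=0}^∞ binom(2m,m)(T − T²)^m, satisfies range(P) ⊆ range(T); in particular P has finite rank. -/
/-!
Write `P = T - ½ (I - 2T)(S - I)`. Every term of `S - I = ∑_{m ≥ 1} binom(2m,m) (T - T²)^m`
factors as `T * (…)`, so it has range in `range T`; this subspace is finite-dimensional, hence
closed, so the sum `S - I` has range in it as well. Finally `I - 2T` commutes with `T` and therefore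
preserves `range T`.
-/

theorem sub_sq_pow_succ {R : Type*} [Ring R] (a : R) (n : ℕ) :
    (a - a ^ 2) ^ (n + 1) = a * ((1 - a) * (a - a ^ 2) ^ n) := by
  rw [pow_succ', ← mul_assoc, mul_one_sub, sq]

namespace ContinuousLinearMap

variable {𝕜 E F : Type*} [NontriviallyNormedField 𝕜] [SeminormedAddCommGroup E]
  [NormedAddCommGroup F] [NormedSpace 𝕜 E] [NormedSpace 𝕜 F]

theorem range_le_of_hasSum {ι : Type*} {R : Submodule 𝕜 F} (hR : IsClosed (R : Set F))
    {f : ι → E →L[𝕜] F} {A : E →L[𝕜] F} (hA : HasSum f A)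
    (hf : ∀ i, LinearMap.range (f i : E →ₗ[𝕜] F) ≤ R) :
    LinearMap.range (A : E →ₗ[𝕜] F) ≤ R := by
  rintro _ ⟨x, rfl⟩
  have hx := (hA.mapL (apply 𝕜 F x)).tsum_eq
  simp only [apply_apply] at hx
  exact hx ▸ tsum_mem hR fun i => hf i ⟨x, rfl⟩

theorem range_mul_le_left (T B : E →L[𝕜] E) :
    LinearMap.range ((T * B : E →L[𝕜] E) : E →ₗ[𝕜] E) ≤
      LinearMap.range (T : E →ₗ[𝕜] E) := by
  rintro _ ⟨x, rfl⟩
  exact ⟨B x, rfl⟩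

theorem range_mul_le_of_commute {A B T : E →L[𝕜] E} (hAT : Commute A T)
    (hB : LinearMap.range (B : E →ₗ[𝕜] E) ≤ LinearMap.range (T : E →ₗ[𝕜] E)) :
    LinearMap.range ((A * B : E →L[𝕜] E) : E →ₗ[𝕜] E) ≤
      LinearMap.range (T : E →ₗ[𝕜] E) := by
  rintro _ ⟨x, rfl⟩
  obtain ⟨y, hy⟩ := hB ⟨x, rfl⟩
  refine ⟨A y, ?_⟩
  change (T * A) y = A (B x)
  rw [← hAT.eq]
  exact congrArg A hy

end ContinuousLinearMap

section

variable {X : Type*} [NormedAddCommGroup X] [NormedSpace ℝ X]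

theorem range_centralBinom_series_sub_one_le {T S : X →L[ℝ] X}
    (hfin : FiniteDimensional ℝ (LinearMap.range (T : X →ₗ[ℝ] X)))
    (hS : HasSum (fun m : ℕ => (Nat.centralBinom m : ℝ) • (T - T ^ 2) ^ m) S) :
    LinearMap.range ((S - 1 : X →L[ℝ] X) : X →ₗ[ℝ] X) ≤
      LinearMap.range (T : X →ₗ[ℝ] X) := by
  have hS' : HasSum (fun m : ℕ => (Nat.centralBinom (m + 1) : ℝ) • (T - T ^ 2) ^ (m + 1))
      (S - 1) := by
    simpa using (hasSum_nat_add_iff' 1).mpr hS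
  refine ContinuousLinearMap.range_le_of_hasSum (Submodule.closed_of_finiteDimensional _) hS'
    fun m => ?_
  rw [sub_sq_pow_succ, ← mul_smul_comm]
  exact ContinuousLinearMap.range_mul_le_left _ _

theorem half_smul_one_sub_eq (T S : X →L[ℝ] X) :
    (1 / 2 : ℝ) • ((1 : X →L[ℝ] X) - ((1 : X →L[ℝ] X) - 2 • T) * S) =
      T - (1 / 2 : ℝ) • ((1 - 2 • T) * (S - 1)) := by
  rw [mul_sub, mul_one]
  module

end

theorem stmt_11_general {X : Type*} [NormedAddCommGroup X] [NormedSpace ℝ X]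
    (T : X →L[ℝ] X) (hfin : FiniteDimensional ℝ (LinearMap.range (T : X →ₗ[ℝ] X)))
    (S : X →L[ℝ] X)
    (hS : HasSum (fun m : ℕ => (Nat.centralBinom m : ℝ) • (T - T ^ 2) ^ m) S) :
    LinearMap.range (((1 / 2 : ℝ) • ((1 : X →L[ℝ] X) - ((1 : X →L[ℝ] X) - 2 • T) * S) : X →L[ℝ] X) : X →ₗ[ℝ] X) ≤
        LinearMap.range (T : X →ₗ[ℝ] X) ∧
      FiniteDimensional ℝ
        (LinearMap.range (((1 / 2 : ℝ) • ((1 : X →L[ℝ] X) - ((1 : X →L[ℝ] X) - 2 • T) * S) : X →L[ℝ] X) : X →ₗ[ℝ] X)) := by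
  have hcomm : Commute (1 - 2 • T) T :=
    (Commute.one_left T).sub_left ((Commute.refl T).smul_left 2)
  have htail := ContinuousLinearMap.range_mul_le_of_commute hcomm
    (range_centralBinom_series_sub_one_le hfin hS)
  have hle : LinearMap.range (((1 / 2 : ℝ) • ((1 : X →L[ℝ] X) - ((1 : X →L[ℝ] X) - 2 • T) * S) :
      X →L[ℝ] X) : X →ₗ[ℝ] X) ≤ LinearMap.range (T : X →ₗ[ℝ] X) := by
    rw [half_smul_one_sub_eq]
    rintro _ ⟨x, rfl⟩
    exact Submodule.sub_mem _ ⟨x, rfl⟩ (Submodule.smul_mem _ _ (htail ⟨x, rfl⟩))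
  exact ⟨hle, Submodule.finiteDimensional_of_le hle⟩

/-- if `T` has finite rank then `range P ⊆ range T`, so `P` has finite rank. -/
theorem stmt_11 {X : Type*} [NormedAddCommGroup X] [NormedSpace ℝ X] [CompleteSpace X]
    (T : X →L[ℝ] X) (hfin : FiniteDimensional ℝ (LinearMap.range (T : X →ₗ[ℝ] X)))
    (θ : ℝ) (hθ : θ < 1 / 4) (hT : ‖T - T ^ 2‖ ≤ θ)
    (S : X →L[ℝ] X)
    (hS : HasSum (fun m : ℕ => (Nat.centralBinom m : ℝ) • (T - T ^ 2) ^ m) S) :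
    LinearMap.range (((1 / 2 : ℝ) • ((1 : X →L[ℝ] X) - ((1 : X →L[ℝ] X) - 2 • T) * S) : X →L[ℝ] X) : X →ₗ[ℝ] X) ≤
        LinearMap.range (T : X →ₗ[ℝ] X) ∧
      FiniteDimensional ℝ
        (LinearMap.range (((1 / 2 : ℝ) • ((1 : X →L[ℝ] X) - ((1 : X →L[ℝ] X) - 2 • T) * S) : X →L[ℝ] X) : X →ₗ[ℝ] X)) :=
  stmt_11_general T hfin S hS
end

section
/- Let X be a Banach space, ε > 0, λ ≥ 1, and T a bounded operator with ‖T‖ ≤ λ. There exists θ = θ(λ, ε) ∈ (0, 1/4), depending continuously on (λ, ε) and not on T, such that if ‖T − T²‖ ≤ θ, then the projection P = (1/2)(I − (I − 2T)S) (with S the central-binomial power series in T − T²) satisfies: for every x ∈ B_X with ‖Tx − x‖ < ε/2, we have ‖Px − x‖ < ε. -/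
/-!
Since `binom(2m, m) ≤ 4^m`, the series `S = Σ binom(2m, m) (T - T²)^m` is dominated by a geometric
series, so `‖S - 1‖ ≤ 4θ / (1 - 4θ) ≤ 8θ` once `‖T - T²‖ ≤ θ ≤ 1/8` (cruder than the exact value
`(1 - 4θ)^(-1/2) - 1`, but enough). The identity `P - T = ½ (1 - 2T)(1 - S)` then gives
`‖P - T‖ ≤ 4 (1 + 2λ) θ`, which is at most `ε/2` for `θ = ε / (8 (1 + 2λ + ε))`; finally
`‖Px - x‖ ≤ ‖(P - T) x‖ + ‖Tx - x‖ < ε/2 + ε/2`.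
-/

theorem norm_sub_one_le_of_hasSum_centralBinom {R : Type*} [SeminormedRing R] [NormedAlgebra ℝ R]
    {q s : R} (hq : 4 * ‖q‖ < 1)
    (hs : HasSum (fun m : ℕ => (Nat.centralBinom m : ℝ) • q ^ m) s) :
    ‖s - 1‖ ≤ 4 * ‖q‖ / (1 - 4 * ‖q‖) := by
  have htail : HasSum (fun m : ℕ => (Nat.centralBinom (m + 1) : ℝ) • q ^ (m + 1)) (s - 1) := by
    simpa using (hasSum_nat_add_iff' 1).mpr hs
  have hgeom : HasSum (fun m : ℕ => (4 * ‖q‖) ^ (m + 1)) (4 * ‖q‖ / (1 - 4 * ‖q‖)) := by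
    simpa only [pow_succ', div_eq_mul_inv] using
      (hasSum_geometric_of_lt_one (by positivity) hq).mul_left (4 * ‖q‖)
  refine htail.norm_le_of_bounded hgeom fun m => ?_
  calc ‖(Nat.centralBinom (m + 1) : ℝ) • q ^ (m + 1)‖
      = Nat.centralBinom (m + 1) * ‖q ^ (m + 1)‖ := by rw [norm_smul, Real.norm_natCast]
    _ ≤ 4 ^ (m + 1) * ‖q‖ ^ (m + 1) := by
      gcongr
      · exact_mod_cast Nat.centralBinom_le_four_pow _
      · exact norm_pow_le' q m.succ_pos
    _ = (4 * ‖q‖) ^ (m + 1) := (mul_pow _ _ _).symm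

noncomputable def binomProjection {R : Type*} [Ring R] [Algebra ℝ R] (T S : R) : R :=
  (1 / 2 : ℝ) • (1 - (1 - 2 • T) * S)

theorem binomProjection_sub_self {R : Type*} [Ring R] [Algebra ℝ R] (T S : R) :
    binomProjection T S - T = (1 / 2 : ℝ) • ((1 - 2 • T) * (1 - S)) := by
  rw [binomProjection, mul_sub, mul_one, two_nsmul, ← two_smul ℝ T]
  module

theorem norm_binomProjection_sub_self_le {X : Type*} [NormedAddCommGroup X] [NormedSpace ℝ X]
    (T S : X →L[ℝ] X) : ‖binomProjection T S - T‖ ≤ (1 + 2 * ‖T‖) * ‖S - 1‖ / 2 := by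
  have h1T : ‖1 - 2 • T‖ ≤ 1 + 2 * ‖T‖ :=
    (norm_sub_le _ _).trans (add_le_add ContinuousLinearMap.norm_id_le norm_nsmul_le)
  rw [binomProjection_sub_self, norm_smul, norm_sub_rev S]
  calc ‖(1 / 2 : ℝ)‖ * ‖(1 - 2 • T) * (1 - S)‖ = ‖(1 - 2 • T) * (1 - S)‖ / 2 := by
        rw [Real.norm_of_nonneg (by norm_num)]; ring
    _ ≤ (1 + 2 * ‖T‖) * ‖1 - S‖ / 2 := by
      gcongr
      exact (norm_mul_le _ _).trans (by gcongr)

noncomputable def projTolerance (lam ε : ℝ) : ℝ := |ε| / (8 * (1 + 2 * |lam| + |ε|))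

theorem continuous_projTolerance : Continuous fun p : ℝ × ℝ => projTolerance p.1 p.2 :=
  Continuous.div (by fun_prop) (by fun_prop) fun _ => by positivity

theorem projTolerance_pos (lam : ℝ) {ε : ℝ} (hε : ε ≠ 0) : 0 < projTolerance lam ε := by
  unfold projTolerance
  positivity

theorem projTolerance_lt_eighth (lam ε : ℝ) : projTolerance lam ε < 1 / 8 := by
  rw [projTolerance, div_lt_iff₀ (by positivity)]
  linarith [abs_nonneg lam]

theorem mul_projTolerance_le {lam : ℝ} (hlam : 0 ≤ lam) (ε : ℝ) :
    8 * (1 + 2 * lam) * projTolerance lam ε ≤ |ε| := by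
  rw [projTolerance, abs_of_nonneg hlam, mul_div_assoc', div_le_iff₀ (by positivity)]
  nlinarith [abs_nonneg ε]

theorem stmt_12_general {X : Type*} [NormedAddCommGroup X] [NormedSpace ℝ X] :
    ∃ θ : ℝ × ℝ → ℝ, Continuous θ ∧
      ∀ lam ε : ℝ, 1 ≤ lam → 0 < ε →
        θ (lam, ε) ∈ Set.Ioo (0 : ℝ) (1 / 4) ∧
        ∀ T S : X →L[ℝ] X, ‖T‖ ≤ lam → ‖T - T ^ 2‖ ≤ θ (lam, ε) →
          HasSum (fun m : ℕ => (Nat.centralBinom m : ℝ) • (T - T ^ 2) ^ m) S →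
          ∀ x : X, ‖x‖ ≤ 1 → ‖T x - x‖ < ε / 2 →
            ‖((1 / 2 : ℝ) • ((1 : X →L[ℝ] X) - ((1 : X →L[ℝ] X) - 2 • T) * S)) x - x‖ < ε := by
  refine ⟨fun p => projTolerance p.1 p.2, continuous_projTolerance, fun lam ε hlam hε => ?_⟩
  have hθ := projTolerance_lt_eighth lam ε
  refine ⟨⟨projTolerance_pos lam hε.ne', hθ.trans (by norm_num)⟩, ?_⟩
  intro T S hT hq hS x hx hTx
  have hS1 : ‖S - 1‖ ≤ 8 * projTolerance lam ε :=
    calc ‖S - 1‖ ≤ 4 * ‖T - T ^ 2‖ / (1 - 4 * ‖T - T ^ 2‖) :=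
          norm_sub_one_le_of_hasSum_centralBinom (by linarith) hS
      _ ≤ 8 * ‖T - T ^ 2‖ := by
          rw [div_le_iff₀ (by linarith)]
          nlinarith [norm_nonneg (T - T ^ 2)]
      _ ≤ 8 * projTolerance lam ε := by linarith
  have hPT : ‖binomProjection T S - T‖ ≤ ε / 2 := by
    have htol := mul_projTolerance_le (zero_le_one.trans hlam) ε
    rw [abs_of_pos hε] at htol
    calc ‖binomProjection T S - T‖ ≤ (1 + 2 * ‖T‖) * ‖S - 1‖ / 2 :=
          norm_binomProjection_sub_self_le T S
      _ ≤ (1 + 2 * lam) * (8 * projTolerance lam ε) / 2 := by gcongr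
      _ ≤ ε / 2 := by linarith
  change ‖binomProjection T S x - x‖ < ε
  calc ‖binomProjection T S x - x‖ = ‖(binomProjection T S - T) x + (T x - x)‖ := by
        rw [sub_apply, sub_add_sub_cancel]
    _ ≤ ‖binomProjection T S - T‖ * ‖x‖ + ‖T x - x‖ :=
        norm_add_le_of_le (ContinuousLinearMap.le_opNorm _ _) le_rfl
    _ < ε / 2 * 1 + ε / 2 :=
        add_lt_add_of_le_of_lt (mul_le_mul hPT hx (norm_nonneg _) (by positivity)) hTx
    _ = ε := by ring

/-- there is a continuous choice `(λ, ε) ↦ θ(λ, ε) ∈ (0, 1/4)`, independent of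
`T`, such that whenever `‖T‖ ≤ λ` and `‖T - T²‖ ≤ θ`, the projection
`P = (1/2)(I - (I - 2T)S)` satisfies `‖Px - x‖ < ε` for all `x` in the unit ball with
`‖Tx - x‖ < ε/2`. -/
theorem stmt_12 {X : Type*} [NormedAddCommGroup X] [NormedSpace ℝ X] [CompleteSpace X] :
    ∃ θ : ℝ × ℝ → ℝ, Continuous θ ∧
      ∀ lam ε : ℝ, 1 ≤ lam → 0 < ε →
        θ (lam, ε) ∈ Set.Ioo (0 : ℝ) (1 / 4) ∧
        ∀ T S : X →L[ℝ] X, ‖T‖ ≤ lam → ‖T - T ^ 2‖ ≤ θ (lam, ε) →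
          HasSum (fun m : ℕ => (Nat.centralBinom m : ℝ) • (T - T ^ 2) ^ m) S →
          ∀ x : X, ‖x‖ ≤ 1 → ‖T x - x‖ < ε / 2 →
            ‖((1 / 2 : ℝ) • ((1 : X →L[ℝ] X) - ((1 : X →L[ℝ] X) - 2 • T) * S)) x - x‖ < ε :=
  stmt_12_general
end
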